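/- Channel convexity of synergy: for a fixed source distribution p_X, the map p_{Y|X} ↦ S^𝛂(X → Y) is convex; i.e., if p_{Y|X} = θ p^1_{Y|X} + (1−θ) p^2_{Y|X} with θ ∈ [0,1], then S^𝛂(X → Y) ≤ θ S^𝛂_1(X → Y) + (1−θ) S^𝛂_2(X → Y), where S^𝛂_i is computed with target channel p^i_{Y|X}. -/

import Mathlib

open Finset
open scoped BigOperators Classical

/-- Shannon entropy (in bits) of a finite distribution. -/
noncomputable def H {A : Type*} [Fintype A] (p : A → ℝ) : ℝ :=
  ∑ a, (if p a = 0 then 0 else -(p a * Real.logb 2 (p a)))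

/-- Shannon mutual information (in bits) of a finite joint distribution. -/
noncomputable def MI {A B : Type*} [Fintype A] [Fintype B] (p : A → B → ℝ) : ℝ :=
  ∑ a, ∑ b,
    (if p a b = 0 then 0 else
      p a b * Real.logb 2 (p a b / ((∑ b', p a b') * (∑ a', p a' b))))

/-- Conditional mutual information `I(A; B | C)` of a finite joint distribution. -/
noncomputable def CMI {A B C : Type*} [Fintype A] [Fintype B] [Fintype C]
    (p : A → B → C → ℝ) : ℝ :=
  ∑ a, ∑ b, ∑ c,
    (if p a b c = 0 then 0 else
      p a b c * Real.logb 2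
        ((p a b c * (∑ a', ∑ b', p a' b' c)) /
          ((∑ b', p a b' c) * (∑ a', p a' b c))))

def IsJoint {A B : Type*} [Fintype A] [Fintype B] (p : A → B → ℝ) : Prop :=
  (∀ a b, 0 ≤ p a b) ∧ ∑ a, ∑ b, p a b = 1

def IsDist {A : Type*} [Fintype A] (p : A → ℝ) : Prop :=
  (∀ a, 0 ≤ p a) ∧ ∑ a, p a = 1

def IsChannel {A B : Type*} [Fintype A] [Fintype B] (c : A → B → ℝ) : Prop :=
  (∀ a b, 0 ≤ c a b) ∧ ∀ a, ∑ b, c a b = 1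

/-- Given a joint distribution `q` of `(V, X)`, the pair `(V, f(X))` is independent. -/
def IndepWithFun {V X T : Type*} [Fintype V] [Fintype X] (q : V → X → ℝ) (f : X → T) : Prop :=
  ∀ v t, (∑ x, if f x = t then q v x else 0) =
    (∑ x, q v x) * (∑ v', ∑ x, if f x = t then q v' x else 0)

/-- Markov chain `A - B - C`: conditional independence of `A` and `C` given `B`. -/
def MarkovChain {A B C : Type*} [Fintype A] [Fintype B] [Fintype C]
    (q : A → B → C → ℝ) : Prop :=
  ∀ a b c, q a b c * (∑ a', ∑ c', q a' b c') =
    (∑ c', q a b c') * (∑ a', q a' b c)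

/-- Restriction `X^α` of a tuple to the coordinates in `α`. -/
def restr {n : ℕ} {𝓧 : Fin n → Type*} (α : Finset (Fin n)) (x : ∀ i, 𝓧 i) :
    ∀ i : α, 𝓧 i.1 := fun i => x i.1

/-- The set of values `I(V;Y)` achievable through `𝛂`-synergistic channels `p_{V|X}`
(so that `V - X - Y` is a Markov chain and `V ⫫ X^α` for every `α ∈ A`). -/
def synSet {n : ℕ} {𝓧 : Fin n → Type*} [∀ i, Fintype (𝓧 i)] {Y : Type*} [Fintype Y]
    (p : (∀ i, 𝓧 i) → Y → ℝ) (A : Finset (Finset (Fin n))) : Set ℝ :=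
  { r | ∃ (k : ℕ) (c : (∀ i, 𝓧 i) → Fin k → ℝ), IsChannel c ∧
      (∀ α ∈ A, IndepWithFun (fun v x => c x v * (∑ y, p x y)) (restr (𝓧 := 𝓧) α)) ∧
      r = MI (fun (v : Fin k) (y : Y) => ∑ x, c x v * p x y) }

/-- Synergistic disclosure `S^𝛂(X → Y)`. -/
noncomputable def Syn {n : ℕ} {𝓧 : Fin n → Type*} [∀ i, Fintype (𝓧 i)] {Y : Type*} [Fintype Y]
    (p : (∀ i, 𝓧 i) → Y → ℝ) (A : Finset (Finset (Fin n))) : ℝ :=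
  sSup (synSet p A)

/-- The joint distribution of the pair `(X, X)`, used for self-synergy `S^𝛂(X → X)`. -/
noncomputable def selfJoint {X : Type*} [Fintype X] (pX : X → ℝ) : X → X → ℝ :=
  fun x x' => if x' = x then pX x else 0

/-! Whether a channel `p_{V|X}` is admissible depends on the target `p_{XY}` only through `p_X`,
so every channel admissible for the mixed target is admissible for both components. For such
a channel the induced joint of `(V, Y)` is the same mixture of the two component joints, all
three sharing the marginal of `V`, and `I(V;Y)` is convex along joints with a fixed
`V`-marginal: its summands `a log (a / b)` are jointly convex, as `(a, b) ↦ a log (a / b)` lies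
above each of its tangent planes. Taking suprema gives the claim. -/

noncomputable def relEntTerm (a b : ℝ) : ℝ :=
  if a = 0 then 0 else a * Real.logb 2 (a / b)

lemma relEntTerm_zero_left (b : ℝ) : relEntTerm 0 b = 0 := if_pos rfl

lemma relEntTerm_mul_mul (t a b : ℝ) : relEntTerm (t * a) (t * b) = t * relEntTerm a b := by
  rcases eq_or_ne t 0 with rfl | ht
  · simp [relEntTerm_zero_left]
  rcases eq_or_ne a 0 with rfl | ha
  · simp [relEntTerm_zero_left]
  rw [relEntTerm, relEntTerm, if_neg (mul_ne_zero ht ha), if_neg ha, mul_div_mul_left _ _ ht,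
    mul_assoc]

lemma tangent_le_relEntTerm {a b a₀ b₀ : ℝ} (ha : 0 ≤ a) (hb : 0 ≤ b) (ha₀ : 0 < a₀)
    (hb₀ : 0 < b₀) (hab : a ≠ 0 → 0 < b) :
    a * Real.logb 2 (a₀ / b₀) + (a - b * (a₀ / b₀)) / Real.log 2 ≤ relEntTerm a b := by
  rcases eq_or_ne a 0 with rfl | ha0
  · rw [relEntTerm_zero_left, zero_mul, zero_add, zero_sub]
    exact div_nonpos_of_nonpos_of_nonneg (by simp only [neg_nonpos]; positivity)
      (Real.log_nonneg one_le_two)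
  have hpos : 0 < a := ha.lt_of_ne' ha0
  have hb' := hab ha0
  have hlog := Real.one_sub_inv_le_log_of_pos (x := (a / b) / (a₀ / b₀)) (by positivity)
  rw [Real.log_div (by positivity) (by positivity), inv_div] at hlog
  have key : a - b * (a₀ / b₀) ≤ a * (Real.log (a / b) - Real.log (a₀ / b₀)) :=
    calc a - b * (a₀ / b₀) = a * (1 - (a₀ / b₀) / (a / b)) := by field_simp
      _ ≤ _ := mul_le_mul_of_nonneg_left hlog ha
  rw [relEntTerm, if_neg ha0, ← sub_nonneg]
  have hdiff : a * Real.logb 2 (a / b) - (a * Real.logb 2 (a₀ / b₀) + (a - b * (a₀ / b₀)) /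
      Real.log 2) = (a * (Real.log (a / b) - Real.log (a₀ / b₀)) - (a - b * (a₀ / b₀))) /
      Real.log 2 := by
    simp only [Real.logb]; ring
  rw [hdiff]
  exact div_nonneg (sub_nonneg.2 key) (Real.log_nonneg one_le_two)

lemma relEntTerm_add_le {a₁ a₂ b₁ b₂ : ℝ} (ha₁ : 0 ≤ a₁) (ha₂ : 0 ≤ a₂) (hb₁ : 0 ≤ b₁)
    (hb₂ : 0 ≤ b₂) (h₁ : a₁ ≠ 0 → 0 < b₁) (h₂ : a₂ ≠ 0 → 0 < b₂) :
    relEntTerm (a₁ + a₂) (b₁ + b₂) ≤ relEntTerm a₁ b₁ + relEntTerm a₂ b₂ := by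
  rcases (add_nonneg ha₁ ha₂).eq_or_lt with hA | hA
  · obtain ⟨rfl, rfl⟩ := (add_eq_zero_iff_of_nonneg ha₁ ha₂).1 hA.symm
    simp [relEntTerm_zero_left]
  have hB : 0 < b₁ + b₂ := by
    rcases eq_or_ne a₁ 0 with rfl | ha₁0
    · linarith [h₂ (by linarith)]
    · linarith [h₁ ha₁0]
  have t₁ := tangent_le_relEntTerm ha₁ hb₁ hA hB h₁
  have t₂ := tangent_le_relEntTerm ha₂ hb₂ hA hB h₂
  calc relEntTerm (a₁ + a₂) (b₁ + b₂)
      = (a₁ * Real.logb 2 ((a₁ + a₂) / (b₁ + b₂)) + (a₁ - b₁ * ((a₁ + a₂) / (b₁ + b₂))) /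
          Real.log 2) + (a₂ * Real.logb 2 ((a₁ + a₂) / (b₁ + b₂)) +
          (a₂ - b₂ * ((a₁ + a₂) / (b₁ + b₂))) / Real.log 2) := by
        rw [relEntTerm, if_neg hA.ne']
        field_simp
        ring
    _ ≤ relEntTerm a₁ b₁ + relEntTerm a₂ b₂ := add_le_add t₁ t₂

lemma relEntTerm_le_sq_div {a b : ℝ} (ha : 0 ≤ a) (hb : 0 ≤ b) :
    relEntTerm a b ≤ a ^ 2 / b / Real.log 2 := by
  unfold relEntTerm
  split_ifs
  · positivity
  · calc a * Real.logb 2 (a / b) = a * Real.log (a / b) / Real.log 2 := by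
          rw [Real.logb, mul_div_assoc]
      _ ≤ a * (a / b) / Real.log 2 := by
          gcongr
          exact Real.log_le_self (div_nonneg ha hb)
      _ = a ^ 2 / b / Real.log 2 := by ring

lemma relEntTerm_mul_add_mul_le {a₁ a₂ b₁ b₂ s t : ℝ} (ha₁ : 0 ≤ a₁) (ha₂ : 0 ≤ a₂)
    (hb₁ : 0 ≤ b₁) (hb₂ : 0 ≤ b₂) (h₁ : a₁ ≠ 0 → 0 < b₁) (h₂ : a₂ ≠ 0 → 0 < b₂)
    (hs : 0 ≤ s) (ht : 0 ≤ t) :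
    relEntTerm (s * a₁ + t * a₂) (s * b₁ + t * b₂) ≤
      s * relEntTerm a₁ b₁ + t * relEntTerm a₂ b₂ := by
  have scaled : ∀ {u a b : ℝ}, 0 ≤ u → (a ≠ 0 → 0 < b) → u * a ≠ 0 → 0 < u * b :=
    fun hu hab hua => mul_pos (hu.lt_of_ne' (left_ne_zero_of_mul hua))
      (hab (right_ne_zero_of_mul hua))
  rw [← relEntTerm_mul_mul s, ← relEntTerm_mul_mul t]
  exact relEntTerm_add_le (by positivity) (by positivity) (by positivity) (by positivity)
    (scaled hs h₁) (scaled ht h₂)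

section MutualInformation

variable {V Y : Type*} [Fintype V] [Fintype Y]

lemma MI_eq_sum_relEntTerm (q : V → Y → ℝ) :
    MI q = ∑ v, ∑ y, relEntTerm (q v y) ((∑ y', q v y') * ∑ v', q v' y) := rfl

lemma pos_rowSum_mul_colSum {q : V → Y → ℝ} (hq : ∀ v y, 0 ≤ q v y) {v : V} {y : Y}
    (hvy : q v y ≠ 0) : 0 < (∑ y', q v y') * ∑ v', q v' y := by
  have hpos := (hq v y).lt_of_ne' hvy
  exact mul_pos (hpos.trans_le (single_le_sum (fun y' _ => hq v y') (mem_univ y)))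
    (hpos.trans_le (single_le_sum (fun v' _ => hq v' y) (mem_univ v)))

theorem convexOn_MI (r : V → ℝ) :
    ConvexOn ℝ {q : V → Y → ℝ | (∀ v y, 0 ≤ q v y) ∧ ∀ v, ∑ y, q v y = r v} MI := by
  have mix_sum : ∀ {q₁ q₂ : V → Y → ℝ}, (∀ v, ∑ y, q₁ v y = r v) → (∀ v, ∑ y, q₂ v y = r v) →
      ∀ {s t : ℝ}, s + t = 1 → ∀ v, ∑ y, (s • q₁ + t • q₂) v y = r v := by
    intro q₁ q₂ hr₁ hr₂ s t hst v
    simp only [Pi.add_apply, Pi.smul_apply, smul_eq_mul, sum_add_distrib, ← mul_sum, hr₁, hr₂,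
      ← add_mul, hst, one_mul]
  refine ⟨?_, ?_⟩
  · rintro q₁ ⟨hq₁, hr₁⟩ q₂ ⟨hq₂, hr₂⟩ s t hs ht hst
    refine ⟨fun v y => ?_, mix_sum hr₁ hr₂ hst⟩
    have := hq₁ v y
    have := hq₂ v y
    simp only [Pi.add_apply, Pi.smul_apply, smul_eq_mul]
    positivity
  · rintro q₁ ⟨hq₁, hr₁⟩ q₂ ⟨hq₂, hr₂⟩ s t hs ht hst
    have term : ∀ v y, relEntTerm ((s • q₁ + t • q₂) v y) (r v * ∑ v', (s • q₁ + t • q₂) v' y) ≤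
        s * relEntTerm (q₁ v y) (r v * ∑ v', q₁ v' y) +
          t * relEntTerm (q₂ v y) (r v * ∑ v', q₂ v' y) := by
      intro v y
      have hcol : r v * ∑ v', (s • q₁ + t • q₂) v' y =
          s * (r v * ∑ v', q₁ v' y) + t * (r v * ∑ v', q₂ v' y) := by
        simp only [Pi.add_apply, Pi.smul_apply, smul_eq_mul, sum_add_distrib, ← mul_sum]
        ring
      have h₁ := pos_rowSum_mul_colSum hq₁ (v := v) (y := y)
      have h₂ := pos_rowSum_mul_colSum hq₂ (v := v) (y := y)
      rw [hr₁] at h₁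
      rw [hr₂] at h₂
      rw [hcol]
      exact relEntTerm_mul_add_mul_le (hq₁ v y) (hq₂ v y)
        (mul_nonneg (hr₁ v ▸ sum_nonneg fun y _ => hq₁ v y) (sum_nonneg fun v' _ => hq₁ v' y))
        (mul_nonneg (hr₂ v ▸ sum_nonneg fun y _ => hq₂ v y) (sum_nonneg fun v' _ => hq₂ v' y))
        h₁ h₂ hs ht
    calc MI (s • q₁ + t • q₂)
        = ∑ v, ∑ y, relEntTerm ((s • q₁ + t • q₂) v y) (r v * ∑ v', (s • q₁ + t • q₂) v' y) := by
          simp only [MI_eq_sum_relEntTerm, mix_sum hr₁ hr₂ hst]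
      _ ≤ ∑ v, ∑ y, (s * relEntTerm (q₁ v y) (r v * ∑ v', q₁ v' y) +
          t * relEntTerm (q₂ v y) (r v * ∑ v', q₂ v' y)) := by gcongr with v _ y _; exact term v y
      _ = s • MI q₁ + t • MI q₂ := by
          simp only [MI_eq_sum_relEntTerm, hr₁, hr₂, smul_eq_mul, mul_sum, sum_add_distrib]

theorem MI_le_card_div_log_two {q : V → Y → ℝ} (hq : ∀ v y, 0 ≤ q v y) :
    MI q ≤ Fintype.card Y / Real.log 2 := by
  have term : ∀ v y, relEntTerm (q v y) ((∑ y', q v y') * ∑ v', q v' y) ≤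
      q v y / (∑ v', q v' y) / Real.log 2 := by
    intro v y
    have hrow : q v y ≤ ∑ y', q v y' := single_le_sum (fun y' _ => hq v y') (mem_univ y)
    have hcol : 0 ≤ ∑ v', q v' y := sum_nonneg fun v' _ => hq v' y
    refine (relEntTerm_le_sq_div (hq v y) (mul_nonneg ((hq v y).trans hrow) hcol)).trans ?_
    rw [sq, mul_div_mul_comm]
    gcongr
    exact mul_le_of_le_one_left (div_nonneg (hq v y) hcol)
      (div_le_one_of_le₀ hrow ((hq v y).trans hrow))
  calc MI q = ∑ y, ∑ v, relEntTerm (q v y) ((∑ y', q v y') * ∑ v', q v' y) :=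
        (MI_eq_sum_relEntTerm q).trans sum_comm
    _ ≤ ∑ y, ∑ v, q v y / (∑ v', q v' y) / Real.log 2 := by
        gcongr with y _ v _
        exact term v y
    _ = ∑ y, (∑ v, q v y) / (∑ v', q v' y) / Real.log 2 := by simp only [sum_div]
    _ ≤ ∑ _y : Y, 1 / Real.log 2 := by
        gcongr
        exact div_self_le_one _
    _ = Fintype.card Y / Real.log 2 := by simp [div_eq_mul_inv]

end MutualInformation

lemma IsChannel.convexComb {X Y : Type*} [Fintype X] [Fintype Y] {W₁ W₂ : X → Y → ℝ}
    (h₁ : IsChannel W₁) (h₂ : IsChannel W₂) {θ : ℝ} (hθ₀ : 0 ≤ θ) (hθ₁ : θ ≤ 1) :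
    IsChannel (fun x y => θ * W₁ x y + (1 - θ) * W₂ x y) := by
  refine ⟨fun x y => ?_, fun x => ?_⟩
  · have := h₁.1 x y
    have := h₂.1 x y
    have : 0 ≤ 1 - θ := sub_nonneg.2 hθ₁
    positivity
  · rw [sum_add_distrib, ← mul_sum, ← mul_sum, h₁.2 x, h₂.2 x]
    ring

lemma IsChannel.sum_mul_left {X Y : Type*} [Fintype X] [Fintype Y] {W : X → Y → ℝ}
    (hW : IsChannel W) (f : X → ℝ) (x : X) : ∑ y, f x * W x y = f x := by
  rw [← mul_sum, hW.2 x, mul_one]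

def inducedJoint {X V Y : Type*} [Fintype X] (c : X → V → ℝ) (p : X → Y → ℝ) : V → Y → ℝ :=
  fun v y => ∑ x, c x v * p x y

section InducedJoint

variable {X V Y : Type*} [Fintype X]

lemma inducedJoint_nonneg {c : X → V → ℝ} {p : X → Y → ℝ} (hc : ∀ x v, 0 ≤ c x v)
    (hp : ∀ x y, 0 ≤ p x y) (v : V) (y : Y) : 0 ≤ inducedJoint c p v y :=
  sum_nonneg fun x _ => mul_nonneg (hc x v) (hp x y)

lemma sum_inducedJoint [Fintype Y] (c : X → V → ℝ) (p : X → Y → ℝ) (v : V) :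
    ∑ y, inducedJoint c p v y = ∑ x, c x v * ∑ y, p x y := by
  simp only [inducedJoint, mul_sum]
  exact sum_comm

lemma inducedJoint_smul_add_smul (c : X → V → ℝ) (p₁ p₂ : X → Y → ℝ) (s t : ℝ) :
    inducedJoint c (s • p₁ + t • p₂) = s • inducedJoint c p₁ + t • inducedJoint c p₂ := by
  ext v y
  simp only [inducedJoint, Pi.add_apply, Pi.smul_apply, smul_eq_mul, mul_sum, ← sum_add_distrib]
  exact sum_congr rfl fun x _ => by ring

end InducedJoint

section Synergy

variable {n : ℕ} {𝓧 : Fin n → Type*} [∀ i, Fintype (𝓧 i)] {Y : Type*} [Fintype Y]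
  {A : Finset (Finset (Fin n))}

lemma bddAbove_synSet {p : (∀ i, 𝓧 i) → Y → ℝ} (hp : ∀ x y, 0 ≤ p x y) :
    BddAbove (synSet p A) := by
  refine ⟨Fintype.card Y / Real.log 2, ?_⟩
  rintro _ ⟨k, c, hc, -, rfl⟩
  exact MI_le_card_div_log_two (inducedJoint_nonneg hc.1 hp)

lemma synSet_nonempty {p : (∀ i, 𝓧 i) → Y → ℝ} (hp : ∑ x, ∑ y, p x y = 1) :
    (synSet p A).Nonempty := by
  refine ⟨_, 1, fun _ _ => 1, ⟨fun _ _ => zero_le_one, fun _ => by simp⟩, fun _ _ _ _ => ?_, rfl⟩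
  simp [hp]

lemma MI_inducedJoint_le_Syn {p p' : (∀ i, 𝓧 i) → Y → ℝ} (hp : ∀ x y, 0 ≤ p x y)
    (hpp' : ∀ x, ∑ y, p x y = ∑ y, p' x y) {k : ℕ} {c : (∀ i, 𝓧 i) → Fin k → ℝ}
    (hc : IsChannel c)
    (hind : ∀ α ∈ A, IndepWithFun (fun v x => c x v * ∑ y, p' x y) (restr (𝓧 := 𝓧) α)) :
    MI (inducedJoint c p) ≤ Syn p A :=
  le_csSup (bddAbove_synSet hp) ⟨k, c, hc, by simpa only [hpp'] using hind, rfl⟩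

end Synergy

/-- channel convexity of synergy, `p_{Y|X} ↦ S^𝛂(X → Y)` is convex
for fixed source distribution `p_X`. -/
theorem syn_channel_convexity
    {n : ℕ} {𝓧 : Fin n → Type*} [∀ i, Fintype (𝓧 i)] {Y : Type*} [Fintype Y]
    (pX : (∀ i, 𝓧 i) → ℝ) (hpX : IsDist pX)
    (W1 W2 : (∀ i, 𝓧 i) → Y → ℝ) (h1 : IsChannel W1) (h2 : IsChannel W2)
    (θ : ℝ) (hθ : θ ∈ Set.Icc (0:ℝ) 1)
    (A : Finset (Finset (Fin n))) :
    Syn (fun x y => pX x * (θ * W1 x y + (1 - θ) * W2 x y)) A ≤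
      θ * Syn (fun x y => pX x * W1 x y) A +
        (1 - θ) * Syn (fun x y => pX x * W2 x y) A := by
  obtain ⟨hθ₀, hθ₁⟩ := hθ
  have hW := h1.convexComb h2 hθ₀ hθ₁
  have hmass : ∑ x, ∑ y, pX x * (θ * W1 x y + (1 - θ) * W2 x y) = 1 := by
    simp only [hW.sum_mul_left, hpX.2]
  refine csSup_le (synSet_nonempty hmass) ?_
  rintro _ ⟨k, c, hc, hind, rfl⟩
  have hmix : (fun x y => pX x * (θ * W1 x y + (1 - θ) * W2 x y)) =
      θ • (fun x y => pX x * W1 x y) + (1 - θ) • fun x y => pX x * W2 x y := by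
    ext x y
    simp only [Pi.add_apply, Pi.smul_apply, smul_eq_mul]
    ring
  have hle : ∀ {W : (∀ i, 𝓧 i) → Y → ℝ}, IsChannel W →
      MI (inducedJoint c fun x y => pX x * W x y) ≤ Syn (fun x y => pX x * W x y) A :=
    fun hW' => MI_inducedJoint_le_Syn (fun x y => mul_nonneg (hpX.1 x) (hW'.1 x y))
      (fun x => by rw [hW'.sum_mul_left, hW.sum_mul_left]) hc hind
  have hmem : ∀ {W : (∀ i, 𝓧 i) → Y → ℝ}, IsChannel W → inducedJoint c (fun x y => pX x * W x y) ∈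
      {q | (∀ v y, 0 ≤ q v y) ∧ ∀ v, ∑ y, q v y = ∑ x, c x v * pX x} := fun hW' =>
    ⟨inducedJoint_nonneg hc.1 fun x y => mul_nonneg (hpX.1 x) (hW'.1 x y),
      fun v => by simp only [sum_inducedJoint, hW'.sum_mul_left]⟩
  calc MI (inducedJoint c fun x y => pX x * (θ * W1 x y + (1 - θ) * W2 x y))
      = MI (θ • inducedJoint c (fun x y => pX x * W1 x y) +
          (1 - θ) • inducedJoint c fun x y => pX x * W2 x y) := by
        rw [hmix, inducedJoint_smul_add_smul]
    _ ≤ θ * MI (inducedJoint c fun x y => pX x * W1 x y) +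
          (1 - θ) * MI (inducedJoint c fun x y => pX x * W2 x y) :=
        (convexOn_MI _).2 (hmem h1) (hmem h2) hθ₀ (sub_nonneg.2 hθ₁) (by ring)
    _ ≤ _ := by
        gcongr
        exacts [hle h1, hle h2]
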